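/- arXiv:1903.11445 — 13 statements merged into one kernel-verified Lean document; each statement's English description precedes it below -/
import Mathlib

section
/- Let n ≥ 3. There is no real number ρ ≥ 1 together with a continuous map A : X → ℝ/πℤ, where X ⊆ (ℝ²)ⁿ is the subspace of configurations p = (p₁,…,pₙ) for which not all pᵢ are equal, such that width(A(p), p) ≤ ρ · inf_{θ ∈ ℝ} width(θ, p) holds for every p ∈ X. Here width(θ, p) = max_{i,j} |⟨pᵢ − pⱼ, (−sin θ, cos θ)⟩|, which is π-periodic in θ and hence well-defined for an orientation in ℝ/πℤ. -/
open Real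
open scoped RealInnerProductSpace

noncomputable section

/-- The point of `ℝ²` with coordinates `a`, `b`. -/
def pt (a b : ℝ) : EuclideanSpace ℝ (Fin 2) :=
  (WithLp.equiv 2 (Fin 2 → ℝ)).symm ![a, b]

/-- `width θ p` is the width of the thinnest strip with orientation `θ` covering the
configuration `p`, i.e. `max_{i,j} |⟨pᵢ − pⱼ, (−sin θ, cos θ)⟩|`. -/
def width {n : ℕ} (θ : ℝ) (p : Fin n → EuclideanSpace ℝ (Fin 2)) : ℝ :=
  ⨆ ij : Fin n × Fin n, |⟪p ij.1 - p ij.2, pt (-Real.sin θ) (Real.cos θ)⟫|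

/-! On the configurations with one point at `dir t` and all others at the origin, the only
orientation of width zero is `t`, so `A` must return `t mod π` there: as `t` runs over `[0, 2π]`
this is a loop winding twice around `ℝ/πℤ`. Among valid configurations the loop contracts to a
constant one, by pulling the first point to the origin while lifting a second one to `(0, 1)`;
a third point stays at the origin, and the first two are never there together. Lifting the
contraction, composed with `A`, to the covering `ℝ → ℝ/πℤ` shows that the winding is constant,
a contradiction. -/

namespace AddCircle

theorem eq_zero_of_homotopy_coe_to_const {p T : ℝ} {g : ℝ × ℝ → AddCircle p} (hg : Continuous g)
    (h_zero : ∀ t, g (0, t) = t) (h_one : ∀ t, g (1, t) = g (1, 0))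
    (h_loop : ∀ s, g (s, T) = g (s, 0)) : T = 0 := by
  have cov := isCoveringMap_coe p
  obtain ⟨G, hG0, hG⟩ := (cov.existsUnique_continuousMap_lifts ⟨g, hg⟩ 0 0 (h_zero 0).symm).exists
  have hGg (st : ℝ × ℝ) : (G st : AddCircle p) = g st := congrFun hG st
  have winding_const : G (1, T) - G (1, 0) = G (0, T) - G (0, 0) :=
    cov.const_of_comp (g := fun s ↦ G (s, T) - G (s, 0)) (by fun_prop)
      (fun _ _ ↦ by simp only [coe_sub, hGg, h_loop, sub_self]) 1 0
  have lift_zero : (fun t ↦ G (0, t)) = id :=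
    cov.eq_of_comp_eq (by fun_prop) continuous_id (funext fun t ↦ by simp [hGg, h_zero]) 0 hG0
  have lift_one (t : ℝ) : G (1, t) = G (1, 0) :=
    cov.const_of_comp (g := fun t ↦ G (1, t)) (by fun_prop)
      (fun _ _ ↦ by simp only [hGg, h_one]) t 0
  simpa [lift_one, congrFun lift_zero] using winding_const.symm

lemma coe_eq_coe_of_sin_sub_eq_zero {s t : ℝ} (h : sin (s - t) = 0) :
    (s : AddCircle π) = t := by
  obtain ⟨k, hk⟩ := sin_eq_zero_iff.mp h
  rw [← sub_eq_zero, ← coe_sub, coe_eq_zero_iff]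
  exact ⟨k, by rw [zsmul_eq_mul, hk]⟩

end AddCircle

lemma continuous_pt : Continuous fun ab : ℝ × ℝ ↦ pt ab.1 ab.2 :=
  (PiLp.continuous_toLp 2 _).comp (by fun_prop)

lemma inner_pt_pt (a b c d : ℝ) : ⟪pt a b, pt c d⟫ = a * c + b * d := by
  simp [pt, PiLp.inner_apply, Fin.sum_univ_two]; ring

lemma pt_eq_zero_iff {a b : ℝ} : pt a b = 0 ↔ a = 0 ∧ b = 0 := by
  constructor
  · intro h
    exact ⟨by simpa [pt] using congrArg (· 0) h, by simpa [pt] using congrArg (· 1) h⟩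
  · rintro ⟨rfl, rfl⟩
    ext i; fin_cases i <;> simp [pt]

def dir (t : ℝ) : EuclideanSpace ℝ (Fin 2) := pt (cos t) (sin t)

lemma continuous_dir : Continuous dir := continuous_pt.comp (continuous_cos.prodMk continuous_sin)

lemma dir_ne_zero (t : ℝ) : dir t ≠ 0 := by
  rw [dir, Ne, pt_eq_zero_iff]
  rintro ⟨hc, hs⟩
  simpa [hc, hs] using sin_sq_add_cos_sq t

lemma inner_dir_pt_neg_sin_cos (t θ : ℝ) : ⟪dir t, pt (-sin θ) (cos θ)⟫ = sin (t - θ) := by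
  rw [dir, inner_pt_pt, sin_sub]; ring

section width

variable {n : ℕ}

lemma width_nonneg (θ : ℝ) (p : Fin n → EuclideanSpace ℝ (Fin 2)) : 0 ≤ width θ p :=
  Real.iSup_nonneg fun _ ↦ abs_nonneg _

lemma abs_inner_le_width (θ : ℝ) (p : Fin n → EuclideanSpace ℝ (Fin 2)) (i j : Fin n) :
    |⟪p i - p j, pt (-sin θ) (cos θ)⟫| ≤ width θ p :=
  le_ciSup (f := fun ij : Fin n × Fin n ↦ |⟪p ij.1 - p ij.2, pt (-sin θ) (cos θ)⟫|)
    (Set.finite_range _).bddAbove (i, j)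

lemma iInf_width_eq_zero_of_width_eq_zero {p : Fin n → EuclideanSpace ℝ (Fin 2)} {t : ℝ}
    (h : width t p = 0) : ⨅ φ, width φ p = 0 :=
  le_antisymm (h ▸ ciInf_le ⟨0, by rintro _ ⟨φ, rfl⟩; exact width_nonneg φ p⟩ t)
    (le_ciInf fun φ ↦ width_nonneg φ p)

theorem coe_eq_of_width_le_mul_iInf {p : Fin n → EuclideanSpace ℝ (Fin 2)} {c : Fin n → ℝ}
    {t θ ρ : ℝ} (hp : ∀ i, p i = c i • dir t) {i j : Fin n} (hij : c i ≠ c j)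
    (h : width θ p ≤ ρ * ⨅ φ, width φ p) : (θ : AddCircle π) = t := by
  have inner_eq (φ : ℝ) (i j : Fin n) :
      ⟪p i - p j, pt (-sin φ) (cos φ)⟫ = (c i - c j) * sin (t - φ) := by
    rw [hp, hp, ← sub_smul, real_inner_smul_left, inner_dir_pt_neg_sin_cos]
  have width_self : width t p = 0 :=
    le_antisymm (Real.iSup_le (fun ij ↦ by simp [inner_eq]) le_rfl) (width_nonneg t p)
  rw [iInf_width_eq_zero_of_width_eq_zero width_self, mul_zero] at h
  have := (abs_inner_le_width θ p i j).trans h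
  rw [inner_eq, abs_nonpos_iff, mul_eq_zero] at this
  exact (AddCircle.coe_eq_coe_of_sin_sub_eq_zero (this.resolve_left (sub_ne_zero.mpr hij))).symm

end width

section segmentHomotopy

variable {n : ℕ} (i₁ i₂ : Fin n)

def segmentHomotopy (s t : ℝ) : Fin n → EuclideanSpace ℝ (Fin 2) :=
  Pi.single i₁ ((1 - s) • dir t) + Pi.single i₂ (s • pt 0 1)

lemma continuous_segmentHomotopy :
    Continuous fun st : ℝ × ℝ ↦ segmentHomotopy i₁ i₂ st.1 st.2 := by
  unfold segmentHomotopy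
  exact ((continuous_single i₁).comp ((continuous_const.sub continuous_fst).smul
    (continuous_dir.comp continuous_snd))).add ((continuous_single i₂).comp
    (continuous_fst.smul continuous_const))

variable {i₁ i₂} in
lemma segmentHomotopy_not_forall_eq {i₀ : Fin n} (h₀₁ : i₀ ≠ i₁) (h₀₂ : i₀ ≠ i₂) (h₁₂ : i₁ ≠ i₂)
    (s t : ℝ) : ¬ ∀ i j, segmentHomotopy i₁ i₂ s t i = segmentHomotopy i₁ i₂ s t j := by
  intro h
  have h₁ := h i₁ i₀
  have h₂ := h i₂ i₀
  simp [segmentHomotopy, h₁₂, h₁₂.symm, h₀₁, h₀₂, dir_ne_zero, pt_eq_zero_iff] at h₁ h₂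
  linarith

lemma segmentHomotopy_zero (t : ℝ) (i : Fin n) :
    segmentHomotopy i₁ i₂ 0 t i = (Pi.single i₁ 1 : Fin n → ℝ) i • dir t := by
  by_cases h : i = i₁
  · subst h; simp [segmentHomotopy]
  · simp [segmentHomotopy, h]

lemma segmentHomotopy_one (t : ℝ) : segmentHomotopy i₁ i₂ 1 t = segmentHomotopy i₁ i₂ 1 0 := by
  simp [segmentHomotopy]

lemma segmentHomotopy_two_pi (s : ℝ) :
    segmentHomotopy i₁ i₂ s (2 * π) = segmentHomotopy i₁ i₂ s 0 := by
  simp [segmentHomotopy, dir]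

end segmentHomotopy

/-- There is no stateless topologically stable algorithm with bounded approximation
ratio for the thinnest covering strip: no `ρ ≥ 1` and continuous map `A` from valid
configurations to orientations `ℝ/πℤ` such that the strip of orientation `A p` is
always within factor `ρ` of optimal. -/
theorem stmt_1 (n : ℕ) (hn : 3 ≤ n) :
    ¬ ∃ ρ : ℝ, 1 ≤ ρ ∧
      ∃ A : {p : Fin n → EuclideanSpace ℝ (Fin 2) // ¬ ∀ i j, p i = p j} → AddCircle π,
        Continuous A ∧
        ∀ p : {p : Fin n → EuclideanSpace ℝ (Fin 2) // ¬ ∀ i j, p i = p j},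
          ∀ θ : ℝ, (θ : AddCircle π) = A p →
            width θ p.1 ≤ ρ * ⨅ φ : ℝ, width φ p.1 := by
  rintro ⟨ρ, -, A, hA, hAp⟩
  let i₁ : Fin n := ⟨0, by omega⟩
  let i₂ : Fin n := ⟨1, by omega⟩
  let i₀ : Fin n := ⟨2, by omega⟩
  have h₀₁ : i₀ ≠ i₁ := by simp [i₀, i₁]
  have h₀₂ : i₀ ≠ i₂ := by simp [i₀, i₂]
  have h₁₂ : i₁ ≠ i₂ := by simp [i₁, i₂]
  let q (st : ℝ × ℝ) : {p : Fin n → EuclideanSpace ℝ (Fin 2) // ¬ ∀ i j, p i = p j} :=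
    ⟨segmentHomotopy i₁ i₂ st.1 st.2, segmentHomotopy_not_forall_eq h₀₁ h₀₂ h₁₂ st.1 st.2⟩
  have hq : Continuous q := (continuous_segmentHomotopy i₁ i₂).subtype_mk _
  have forced (t : ℝ) : A (q (0, t)) = t := by
    obtain ⟨θ, hθ⟩ := QuotientAddGroup.mk_surjective (A (q (0, t)))
    rw [← hθ]
    have hne : (Pi.single i₁ 1 : Fin n → ℝ) i₁ ≠ (Pi.single i₁ 1 : Fin n → ℝ) i₀ := by
      simp [h₀₁]
    exact coe_eq_of_width_le_mul_iInf (segmentHomotopy_zero i₁ i₂ t) hne (hAp (q (0, t)) θ hθ)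
  exact two_pi_pos.ne' <| AddCircle.eq_zero_of_homotopy_coe_to_const (hA.comp hq) forced
    (fun t ↦ congrArg A (Subtype.ext (segmentHomotopy_one i₁ i₂ t)))
    (fun s ↦ congrArg A (Subtype.ext (segmentHomotopy_two_pi i₁ i₂ s)))

end
end

section
/- Let p₁, …, pₙ be points in ℝ² and for a unit vector v ∈ ℝ² define G(v) = inf_{b ∈ ℝ} Σᵢ (⟨pᵢ, v⟩ − b)². If v₁ and v₂ are unit vectors with v₁ ≠ v₂ and v₁ ≠ −v₂ such that G(v₁) = G(v₂) = inf{G(w) : w a unit vector}, then G(v) = G(v₁) for every unit vector v. -/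
/-!
The cost `G v` is minimised over `b` at the mean of the `⟪pᵢ, v⟫`, so `G` is the quadratic form
`Q v = ∑ᵢ ⟪pᵢ - c, v⟫²`, `c` the centroid. If `a` is the minimum of `Q` on the unit circle,
`Q - a ‖·‖²` is positive semidefinite, hence its zero set is a subspace (a positive semidefinite
form vanishing at `x` has `polar x · = 0`, by the discriminant of `t ↦ Q (x + t y)`). It contains
the two independent vectors `v₁, v₂`, so it is the whole plane and `Q = a` on the unit circle.
-/

open scoped RealInnerProductSpace
open Finset BigOperators

namespace QuadraticMap

variable {K M : Type*} [Field K] [LinearOrder K] [IsStrictOrderedRing K] [AddCommGroup M]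
  [Module K M]

theorem polar_eq_zero_of_nonneg_of_eq_zero {Q : QuadraticMap K M K} (hQ : ∀ v, 0 ≤ Q v)
    {x : M} (hx : Q x = 0) (y : M) : polar Q x y = 0 := by
  have hline : ∀ t : K, 0 ≤ Q y * (t * t) + polar Q x y * t + 0 := fun t => by
    have := hQ (x + t • y)
    rw [QuadraticMap.map_add Q, hx, QuadraticMap.map_smul, polar_smul_right, smul_eq_mul,
      smul_eq_mul] at this
    linarith
  have := discrim_le_zero hline
  rw [discrim, mul_zero, sub_zero] at this
  exact pow_eq_zero_iff two_ne_zero |>.mp (le_antisymm this (sq_nonneg _))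

theorem eq_zero_of_mem_span_pair {Q : QuadraticMap K M K} (hQ : ∀ v, 0 ≤ Q v)
    {x y z : M} (hx : Q x = 0) (hy : Q y = 0) (hz : z ∈ Submodule.span K {x, y}) : Q z = 0 := by
  obtain ⟨a, b, rfl⟩ := Submodule.mem_span_pair.mp hz
  rw [QuadraticMap.map_add Q, QuadraticMap.map_smul, QuadraticMap.map_smul, polar_smul_left,
    polar_smul_right, polar_eq_zero_of_nonneg_of_eq_zero hQ hx, hx, hy]
  simp

end QuadraticMap

theorem LinearIndependent.pair_of_norm_eq_one {E : Type*} [NormedAddCommGroup E] [NormedSpace ℝ E]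
    {x y : E} (hx : ‖x‖ = 1) (hy : ‖y‖ = 1) (hne : x ≠ y) (hne' : x ≠ -y) :
    LinearIndependent ℝ ![x, y] := by
  refine (LinearIndependent.pair_iff' (norm_ne_zero_iff.mp (hx ▸ one_ne_zero))).mpr ?_
  rintro a rfl
  rw [norm_smul, hx, mul_one, Real.norm_eq_abs] at hy
  rcases abs_eq_abs.mp (hy.trans abs_one.symm) with rfl | rfl
  · exact hne (one_smul ℝ x).symm
  · exact hne' (by rw [neg_one_smul, neg_neg])

theorem QuadraticMap.nonneg_of_nonneg_of_norm_eq_one {E : Type*} [NormedAddCommGroup E]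
    [NormedSpace ℝ E] {Q : QuadraticMap ℝ E ℝ} (hQ : ∀ u, ‖u‖ = 1 → 0 ≤ Q u) (v : E) :
    0 ≤ Q v := by
  rcases eq_or_ne v 0 with rfl | hv
  · rw [QuadraticMap.map_zero]
  have hu : ‖‖v‖⁻¹ • v‖ = 1 := norm_smul_inv_norm hv
  have hsmul : v = ‖v‖ • ‖v‖⁻¹ • v := by rw [smul_inv_smul₀ (norm_ne_zero_iff.mpr hv)]
  rw [hsmul, QuadraticMap.map_smul, smul_eq_mul]
  exact mul_nonneg (mul_self_nonneg _) (hQ _ hu)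

section InnerProductSpace

variable {E : Type*} [NormedAddCommGroup E] [InnerProductSpace ℝ E]

theorem QuadraticMap.apply_eq_of_mem_span_pair_of_minimizers (Q : QuadraticMap ℝ E ℝ)
    {v₁ v₂ : E} (hv₁ : ‖v₁‖ = 1) (hv₂ : ‖v₂‖ = 1) (hmin : ∀ w, ‖w‖ = 1 → Q v₁ ≤ Q w)
    (heq : Q v₁ = Q v₂) {z : E} (hz : z ∈ Submodule.span ℝ {v₁, v₂}) (hz₁ : ‖z‖ = 1) :
    Q z = Q v₁ := by
  set R : QuadraticMap ℝ E ℝ := Q - Q v₁ • LinearMap.BilinMap.toQuadraticMap (innerₗ E)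
  have hR : ∀ v, R v = Q v - Q v₁ * ‖v‖ ^ 2 := fun v => by simp [R]
  have hRnonneg : ∀ v, 0 ≤ R v :=
    nonneg_of_nonneg_of_norm_eq_one fun u hu => by rw [hR, hu]; linarith [hmin u hu]
  have hRz := eq_zero_of_mem_span_pair hRnonneg (by rw [hR, hv₁]; ring)
    (by rw [hR, hv₂, heq]; ring) hz
  rw [hR, hz₁] at hRz
  linarith

end InnerProductSpace

theorem LinearIndependent.span_pair_eq_top_of_finrank_eq_two {K V : Type*} [Field K]
    [AddCommGroup V] [Module K V] {x y : V} (h : LinearIndependent K ![x, y])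
    (hV : Module.finrank K V = 2) : Submodule.span K {x, y} = ⊤ := by
  rw [← Matrix.range_cons_cons_empty x y ![]]
  exact h.span_eq_top_of_card_eq_finrank (by simp [hV])

section Centroid

variable {ι : Type*} [Fintype ι]

theorem iInf_sum_sq_sub_eq_sum_sq_sub_expect (a : ι → ℝ) :
    ⨅ b : ℝ, ∑ i, (a i - b) ^ 2 = ∑ i, (a i - 𝔼 j, a j) ^ 2 := by
  set m := 𝔼 j, a j
  have hdev : ∀ b, ∑ i, (a i - b) ^ 2 = ∑ i, (a i - m) ^ 2 + Fintype.card ι * (m - b) ^ 2 := by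
    intro b
    have hcenter : ∑ i, (a i - m) = 0 := by
      rw [sum_sub_distrib, sum_const, card_univ, Fintype.card_smul_expect, sub_self]
    calc ∑ i, (a i - b) ^ 2 = ∑ i, ((a i - m) ^ 2 + 2 * (m - b) * (a i - m) + (m - b) ^ 2) :=
          sum_congr rfl fun i _ => by ring
      _ = _ := by
          rw [sum_add_distrib, sum_add_distrib, ← mul_sum, hcenter, sum_const, card_univ,
            nsmul_eq_mul, mul_zero, add_zero]
  refine ciInf_eq_of_forall_ge_of_forall_gt_exists_lt (fun b => ?_) fun w hw => ⟨m, ?_⟩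
  · rw [hdev b]
    exact le_add_of_nonneg_right (by positivity)
  · rwa [hdev m, sub_self, zero_pow two_ne_zero, mul_zero, add_zero]

variable {E : Type*} [NormedAddCommGroup E] [InnerProductSpace ℝ E]

theorem iInf_sum_sq_inner_sub_eq (p : ι → E) (v : E) :
    ⨅ b : ℝ, ∑ i, (⟪p i, v⟫ - b) ^ 2 =
      ∑ i, ⟪p i - (Fintype.card ι : ℝ)⁻¹ • ∑ j, p j, v⟫ ^ 2 := by
  rw [iInf_sum_sq_sub_eq_sum_sq_sub_expect, Fintype.expect_eq_sum_div_card]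
  simp only [inner_sub_left, real_inner_smul_left, sum_inner, div_eq_inv_mul]

noncomputable def sumInnerSq (x : ι → E) : QuadraticMap ℝ E ℝ :=
  ∑ i, QuadraticMap.linMulLin (innerₗ E (x i)) (innerₗ E (x i))

theorem sumInnerSq_apply (x : ι → E) (v : E) : sumInnerSq x v = ∑ i, ⟪x i, v⟫ ^ 2 := by
  simp [sumInnerSq, sq]

end Centroid

/-- If two genuinely distinct unit-vector orientations both minimize the
principal-component cost `G v = inf_b Σᵢ (⟨pᵢ, v⟩ − b)²`, then every unit vector
achieves the same cost. -/
theorem stmt_2 (n : ℕ) (p : Fin n → EuclideanSpace ℝ (Fin 2))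
    (G : EuclideanSpace ℝ (Fin 2) → ℝ)
    (hG : ∀ v, G v = ⨅ b : ℝ, ∑ i, (⟪p i, v⟫ - b) ^ 2)
    (v₁ v₂ : EuclideanSpace ℝ (Fin 2))
    (hv₁ : ‖v₁‖ = 1) (hv₂ : ‖v₂‖ = 1)
    (hne : v₁ ≠ v₂) (hne' : v₁ ≠ -v₂)
    (heq : G v₁ = G v₂)
    (hmin : ∀ w : EuclideanSpace ℝ (Fin 2), ‖w‖ = 1 → G v₁ ≤ G w) :
    ∀ v : EuclideanSpace ℝ (Fin 2), ‖v‖ = 1 → G v = G v₁ := by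
  set c := (Fintype.card (Fin n) : ℝ)⁻¹ • ∑ j, p j
  have hGQ : ∀ v, G v = sumInnerSq (fun i => p i - c) v := fun v => by
    rw [hG, iInf_sum_sq_inner_sub_eq, sumInnerSq_apply]
  have hspan : Submodule.span ℝ {v₁, v₂} = ⊤ :=
    (LinearIndependent.pair_of_norm_eq_one hv₁ hv₂ hne hne').span_pair_eq_top_of_finrank_eq_two
      finrank_euclideanSpace_fin
  intro v hv
  simp only [hGQ] at heq hmin ⊢
  exact QuadraticMap.apply_eq_of_mem_span_pair_of_minimizers _ hv₁ hv₂ hmin heq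
    (hspan ▸ Submodule.mem_top) hv
end

section
/- For all real numbers a, b > 0, every angle α with 0 < α < π/2, and every θ with 0 ≤ θ ≤ α: (b·sin(α−θ) + a·sin θ)·(a·sin(α−θ) + b·sin θ)/(a·b·sin²α) ≤ (a+b)²/(2ab(1+cos α)), with equality at θ = α/2. -/
open Real

/-- The intermediate bounding-box area
`C(a,b,α,θ) = (b sin(α−θ) + a sin θ)(a sin(α−θ) + b sin θ)/(ab sin²α)` is maximized
at `θ = α/2`, where it equals `(a+b)²/(2ab(1+cos α))`. -/
theorem stmt_3 (a b α θ : ℝ) (ha : 0 < a) (hb : 0 < b)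
    (hα₀ : 0 < α) (hα₁ : α < π / 2) (hθ₀ : 0 ≤ θ) (hθ₁ : θ ≤ α) :
    (b * Real.sin (α - θ) + a * Real.sin θ) * (a * Real.sin (α - θ) + b * Real.sin θ) /
        (a * b * Real.sin α ^ 2)
      ≤ (a + b) ^ 2 / (2 * a * b * (1 + Real.cos α)) ∧
    (b * Real.sin (α - α / 2) + a * Real.sin (α / 2)) *
        (a * Real.sin (α - α / 2) + b * Real.sin (α / 2)) / (a * b * Real.sin α ^ 2)
      = (a + b) ^ 2 / (2 * a * b * (1 + Real.cos α)) := by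
  have hαπ : α < π := lt_trans hα₁ (by linarith [pi_pos])
  have hsinα : 0 < Real.sin α := Real.sin_pos_of_pos_of_lt_pi hα₀ hαπ
  have hcosα : 0 < Real.cos α := Real.cos_pos_of_mem_Ioo ⟨by linarith [pi_pos], hα₁⟩
  have hcos1 : Real.cos α < 1 := by
    have := Real.sin_sq_add_cos_sq α
    nlinarith [Real.cos_le_one α]
  have hD1 : 0 < a * b * Real.sin α ^ 2 := by positivity
  have hD2 : 0 < 2 * a * b * (1 + Real.cos α) := by positivity
  have hpy : Real.sin α ^ 2 = (1 - Real.cos α) * (1 + Real.cos α) := by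
    have := Real.sin_sq_add_cos_sq α; nlinarith
  constructor
  · -- key identities
    have h1 : Real.sin (α - θ) * Real.sin θ = (Real.cos (α - 2*θ) - Real.cos α) / 2 := by
      have := Real.cos_sub_cos (α - 2*θ) α
      have e1 : (α - 2*θ + α) / 2 = α - θ := by ring
      have e2 : (α - 2*θ - α) / 2 = -θ := by ring
      rw [e1, e2, Real.sin_neg] at this
      linarith
    have h2 : Real.sin (α - θ) ^ 2 + Real.sin θ ^ 2
        = 1 - Real.cos α * Real.cos (α - 2*θ) := by
      have c1 := Real.cos_sq (α - θ)
      have c2 := Real.cos_sq θ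
      have c3 := Real.cos_add_cos (2*(α-θ)) (2*θ)
      have e1 : (2*(α-θ) + 2*θ) / 2 = α := by ring
      have e2 : (2*(α-θ) - 2*θ) / 2 = α - 2*θ := by ring
      rw [e1, e2] at c3
      have s1 := Real.sin_sq_add_cos_sq (α - θ)
      have s2 := Real.sin_sq_add_cos_sq θ
      nlinarith
    have hc : Real.cos (α - 2*θ) ≤ 1 := Real.cos_le_one _
    have key : 2 * ((b * Real.sin (α - θ) + a * Real.sin θ) *
        (a * Real.sin (α - θ) + b * Real.sin θ)) ≤ (a + b) ^ 2 * (1 - Real.cos α) := by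
      nlinarith [h1, h2, mul_nonneg (sub_nonneg.2 hc)
        (show 0 ≤ a^2 + b^2 - 2*a*b*Real.cos α by
          nlinarith [sq_nonneg (a - b), mul_pos ha hb])]
    rw [div_le_div_iff₀ hD1 hD2, hpy]
    have hpos : (0:ℝ) ≤ a * b * (1 + Real.cos α) := by positivity
    have := mul_le_mul_of_nonneg_left key hpos
    nlinarith [this]
  · have e : α - α / 2 = α / 2 := by ring
    have hsh : Real.sin α = 2 * Real.sin (α/2) * Real.cos (α/2) := by
      rw [← Real.sin_two_mul]; ring_nf
    have hch : 1 + Real.cos α = 2 * Real.cos (α/2) ^ 2 := by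
      have h := Real.cos_sq (α/2)
      rw [show 2*(α/2) = α by ring] at h
      linarith
    have hcos2 : 0 < Real.cos (α/2) :=
      Real.cos_pos_of_mem_Ioo ⟨by linarith [pi_pos], by linarith⟩
    have hsin2 : 0 < Real.sin (α/2) :=
      Real.sin_pos_of_pos_of_lt_pi (by linarith) (by linarith [pi_pos])
    rw [e, hsh, hch]
    field_simp
    ring
end

section
/- For all real numbers c with 1 ≤ c ≤ √2 and all angles α with 0 < α ≤ π/4: (1+c)²/(2c(1+cos α)) ≤ 1/2 + √2/2, and in particular this quantity is strictly less than 5/4. -/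
open Real

/-- For `1 ≤ c ≤ √2` and `0 < α ≤ π/4`, the intermediate bounding-box area
`(1+c)²/(2c(1+cos α))` is at most `1/2 + √2/2`, and in particular strictly less
than `5/4`. -/
theorem stmt_4 (c α : ℝ) (hc₁ : 1 ≤ c) (hc₂ : c ≤ Real.sqrt 2)
    (hα₀ : 0 < α) (hα₁ : α ≤ π / 4) :
    (1 + c) ^ 2 / (2 * c * (1 + Real.cos α)) ≤ 1 / 2 + Real.sqrt 2 / 2 ∧
    (1 + c) ^ 2 / (2 * c * (1 + Real.cos α)) < 5 / 4 := by
  have hs2 : Real.sqrt 2 ^ 2 = 2 := Real.sq_sqrt (by norm_num)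
  have hs0 : (0:ℝ) ≤ Real.sqrt 2 := Real.sqrt_nonneg 2
  have hs1 : (1:ℝ) < Real.sqrt 2 := by nlinarith
  have hcos : Real.sqrt 2 / 2 ≤ Real.cos α := by
    have := Real.cos_pi_div_four
    have h := Real.cos_le_cos_of_nonneg_of_le_pi hα₀.le
      (by linarith [Real.pi_pos] : π / 4 ≤ π) hα₁
    linarith
  have hD : 0 < 2 * c * (1 + Real.cos α) := by nlinarith
  have key : (1 + c) ^ 2 / (2 * c * (1 + Real.cos α)) ≤ 1 / 2 + Real.sqrt 2 / 2 := by
    rw [div_le_iff₀ hD]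
    nlinarith [mul_nonneg (sub_nonneg.2 hc₂) (by nlinarith : (0:ℝ) ≤ 2 * c - Real.sqrt 2),
      mul_le_mul_of_nonneg_left hcos (by linarith : (0:ℝ) ≤ c)]
  refine ⟨key, lt_of_le_of_lt key ?_⟩
  nlinarith
end

section
/- For all real numbers a, b and angles α satisfying π/4 < α < π/2, 1 ≤ a ≤ b, and b ≤ a·cos α + (1/a)·sin α: min( (a+b)²/(2ab(1+cos α)), (1+ab)²/(2ab(1+sin α)) ) ≤ 5/4. -/
/-!
With `t = b/a` and `u = ab` the two areas are `(1 + t)² / (2t(1 + cos α))` and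
`(1 + u)² / (2u(1 + sin α))`, and the diagonal constraint reads `u(t - cos α) ≤ t sin α`, with
`1 ≤ t ≤ u`. An area of this shape is at most `5/4` iff a convex quadratic in `t` (resp. `u`) is
nonpositive, so it is enough to trap `u` between `1` and a point where the second quadratic is
nonpositive. For `sin α ≥ 4/5` the bound `u ≤ sin α / (1 - cos α)` already does this. Otherwise,
if the first area exceeds `5/4`, then `t` lies beyond the larger root of the first quadratic, and
`u ≤ t sin α / (t - cos α)` is small enough. Equality holds at `sin α = 4/5`, `t = 1`, `u = 2`.
-/

open Real

/-- Has the sign of `(1 + x)² / (2x(1 + k)) - 5/4` when `0 < x` and `-1 < k`. -/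
def areaExcess (k x : ℝ) : ℝ := 2 * (1 + x) ^ 2 - 5 * x * (1 + k)

lemma div_le_five_div_four_iff_areaExcess_nonpos {k x : ℝ} (hk : -1 < k) (hx : 0 < x) :
    (1 + x) ^ 2 / (2 * x * (1 + k)) ≤ 5 / 4 ↔ areaExcess k x ≤ 0 := by
  rw [div_le_iff₀ (mul_pos (by positivity) (by linarith)), areaExcess]
  constructor <;> intro h <;> linarith

lemma areaExcess_nonpos_of_mem_Icc {k lo hi x : ℝ} (hlo : lo ≤ x) (hhi : x ≤ hi)
    (h_lo : areaExcess k lo ≤ 0) (h_hi : areaExcess k hi ≤ 0) : areaExcess k x ≤ 0 := by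
  rcases (hlo.trans hhi).eq_or_lt with rfl | hlt
  · rwa [le_antisymm hhi hlo]
  unfold areaExcess at *
  nlinarith [mul_nonpos_of_nonneg_of_nonpos (sub_nonneg.2 hhi) h_lo,
    mul_nonpos_of_nonneg_of_nonpos (sub_nonneg.2 hlo) h_hi,
    mul_nonneg (mul_nonneg (sub_nonneg.2 hlo) (sub_nonneg.2 hhi)) (sub_nonneg.2 hlt.le)]

lemma areaExcess_div_one_sub_nonpos {c s : ℝ} (hcs : c ^ 2 + s ^ 2 = 1) (hs : 4 / 5 ≤ s) :
    areaExcess s (s / (1 - c)) ≤ 0 := by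
  have hc : 0 < 1 - c := by nlinarith
  have h : areaExcess s (s / (1 - c)) = (1 + s) * (4 - 5 * s) / (1 - c) := by
    rw [areaExcess]
    field_simp
    linear_combination 2 * hcs
  rw [h]
  exact div_nonpos_of_nonpos_of_nonneg (by nlinarith) hc.le

lemma areaExcess_mul_div_sub_nonpos {c s t : ℝ} (hcs : c ^ 2 + s ^ 2 = 1) (hc : 3 / 5 ≤ c)
    (hc_lt_s : c < s) (ht : 1 ≤ t) (ht' : t ≤ c + s) (hct : 0 < areaExcess c t) :
    areaExcess s (s * t / (t - c)) ≤ 0 := by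
  have hs : s ≤ 4 / 5 := by nlinarith
  have htc : 0 < t - c := by nlinarith
  -- `(t - 1)(2t - 5c + 1) > 5c - 3`; this square-root growth of `t - 1` beats the tight case
  -- `c = 3/5`, `t = 1`
  have hroot : 5 * c - 3 ≤ 2 * (t - 1) ^ 2 := by
    unfold areaExcess at hct
    nlinarith [mul_nonneg (sub_nonneg.2 ht) (sub_nonneg.2 hc)]
  have hP : 2 * s ^ 2 * t ^ 2 + 2 * (t - c) ^ 2 ≤ (5 * s + 1) * s * t * (t - c) := by
    nlinarith [mul_nonneg (sub_nonneg.2 ht) (sub_nonneg.2 ht'),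
      mul_nonneg (sub_nonneg.2 ht) (sub_nonneg.2 hs),
      mul_nonneg (sub_nonneg.2 hc) (sub_nonneg.2 hs),
      mul_nonneg (sub_nonneg.2 ht) (sub_nonneg.2 hroot)]
  have h : areaExcess s (s * t / (t - c)) =
      (2 * s ^ 2 * t ^ 2 + 2 * (t - c) ^ 2 - (5 * s + 1) * s * t * (t - c)) / (t - c) ^ 2 := by
    rw [areaExcess]
    field_simp
    ring
  rw [h]
  exact div_nonpos_of_nonpos_of_nonneg (by linarith) (sq_nonneg _)

lemma areaExcess_nonpos_or_areaExcess_nonpos {c s t u : ℝ} (hcs : c ^ 2 + s ^ 2 = 1) (hc : 0 < c)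
    (hc_lt_s : c < s) (ht : 1 ≤ t) (htu : t ≤ u) (hu : u * (t - c) ≤ s * t) :
    areaExcess c t ≤ 0 ∨ areaExcess s u ≤ 0 := by
  rw [or_iff_not_imp_left, not_le]
  intro hct
  have hs : 3 / 5 < s := by nlinarith
  have h_one : areaExcess s 1 ≤ 0 := by unfold areaExcess; linarith
  have hu1 : 1 ≤ u := ht.trans htu
  rcases le_or_gt (4 / 5) s with hs4 | hs4
  · have hu' : u * (1 - c) ≤ s := by
      nlinarith [mul_nonneg (mul_nonneg (by linarith : (0 : ℝ) ≤ u) hc.le) (sub_nonneg.2 ht)]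
    refine areaExcess_nonpos_of_mem_Icc hu1 ?_ h_one (areaExcess_div_one_sub_nonpos hcs hs4)
    rw [le_div_iff₀ (by nlinarith)]
    exact hu'
  · have htc : 0 < t - c := by linarith
    have ht' : t ≤ c + s := by nlinarith [mul_le_mul_of_nonneg_right htu htc.le]
    refine areaExcess_nonpos_of_mem_Icc hu1 ?_ h_one
      (areaExcess_mul_div_sub_nonpos hcs (by nlinarith) hc_lt_s ht ht' hct)
    rw [le_div_iff₀ htc]
    linarith

/-- For `π/4 < α < π/2`, `1 ≤ a ≤ b` and `b ≤ a cos α + (1/a) sin α`, the minimum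
of the two intermediate bounding-box areas (counterclockwise and clockwise rotation)
is at most `5/4`. -/
theorem stmt_5 (a b α : ℝ) (hα₀ : π / 4 < α) (hα₁ : α < π / 2)
    (ha : 1 ≤ a) (hab : a ≤ b)
    (hdiag : b ≤ a * Real.cos α + (1 / a) * Real.sin α) :
    min ((a + b) ^ 2 / (2 * a * b * (1 + Real.cos α)))
        ((1 + a * b) ^ 2 / (2 * a * b * (1 + Real.sin α))) ≤ 5 / 4 := by
  have hc : 0 < cos α := cos_pos_of_mem_Ioo ⟨by linarith [pi_pos], hα₁⟩
  have hc_lt_s : cos α < sin α := by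
    rw [← cos_pi_div_two_sub]
    exact cos_lt_cos_of_nonneg_of_le_pi (by linarith) (by linarith) (by linarith)
  have ha0 : 0 < a := by linarith
  have hb0 : 0 < b := by linarith
  have hu : a * b * (b / a - cos α) ≤ sin α * (b / a) := by
    rw [show a * b * (b / a - cos α) = b * (b - a * cos α) by field_simp,
      show sin α * (b / a) = b * ((1 / a) * sin α) by ring]
    exact mul_le_mul_of_nonneg_left (by linarith) (by linarith)
  have htu : b / a ≤ a * b := by
    rw [div_le_iff₀ ha0]
    nlinarith [mul_nonneg (mul_nonneg hb0.le (sub_nonneg.2 ha)) (by linarith : (0 : ℝ) ≤ a + 1)]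
  rw [min_le_iff, show (a + b) ^ 2 / (2 * a * b * (1 + cos α))
      = (1 + b / a) ^ 2 / (2 * (b / a) * (1 + cos α)) by field_simp,
    show 2 * a * b * (1 + sin α) = 2 * (a * b) * (1 + sin α) by ring,
    div_le_five_div_four_iff_areaExcess_nonpos (by linarith) (div_pos hb0 ha0),
    div_le_five_div_four_iff_areaExcess_nonpos (by linarith) (mul_pos ha0 hb0)]
  exact areaExcess_nonpos_or_areaExcess_nonpos (cos_sq_add_sin_sq α) hc hc_lt_s
    ((one_le_div ha0).2 hab) htu hu
end

section
/- Let Q = {(0,0), (2,1), (3/4,1), (5/4,0)} ⊂ ℝ². Then the minimum of f_OBB(u, Q) over all unit vectors u equals 2 (attained at u = (1,0) and at u = (cos(2·arctan(1/2)), sin(2·arctan(1/2)))), and for u₀ = (cos(arctan(1/2)), sin(arctan(1/2))) one has f_OBB(u₀, Q) = 5/2. -/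
/-! Up to the symmetries `u ↦ u⊥` and `u ↦ -u` of `f_OBB`, it suffices to treat unit vectors
`u = (a, b)` with `a, b ≥ 0`. There the extremal points of `Q` along `u` are `(2,1)` and `(0,0)`,
and along `u⊥` they switch exactly when `3b = 4a`, which gives
`f_OBB(u, Q) = (2a + b)(a + b/2)` for `3b ≤ 4a` and `f_OBB(u, Q) = (2a + b)(2b - a)` for `4a ≤ 3b`.
Both are `≥ 2` on the unit circle, with equality at `(1, 0)` and at the switch point
`(3/5, 4/5) = (cos 2θ, sin 2θ)`, `θ = arctan (1/2)`, while `(cos θ, sin θ)` gives `5/2`. -/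

open Real
open scoped RealInnerProductSpace

noncomputable section

/-- `v` rotated counterclockwise by `π/2`. -/
def perp (v : EuclideanSpace ℝ (Fin 2)) : EuclideanSpace ℝ (Fin 2) :=
  pt (-(v 1)) (v 0)

/-- The extent of a point set `P` along a vector `v`: `max_{p,q ∈ P} ⟨p − q, v⟩`. -/
def wext (v : EuclideanSpace ℝ (Fin 2)) (P : Set (EuclideanSpace ℝ (Fin 2))) : ℝ :=
  sSup {x : ℝ | ∃ p ∈ P, ∃ q ∈ P, x = ⟪p - q, v⟫}

/-- The oriented-bounding-box cost `f_OBB(u, P) = w_u(P) · w_{u⊥}(P)`. -/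
def fOBB (u : EuclideanSpace ℝ (Fin 2)) (P : Set (EuclideanSpace ℝ (Fin 2))) : ℝ :=
  wext u P * wext (perp u) P

local notation "𝒬" => ({pt 0 0, pt 2 1, pt (3/4) 1, pt (5/4) 0} : Set (EuclideanSpace ℝ (Fin 2)))

lemma pt_eta (u : EuclideanSpace ℝ (Fin 2)) : pt (u 0) (u 1) = u := by
  ext i; fin_cases i <;> rfl

lemma neg_pt (a b : ℝ) : -pt a b = pt (-a) (-b) := by
  ext i; fin_cases i <;> rfl

lemma inner_pt (x y a b : ℝ) : ⟪pt x y, pt a b⟫ = x * a + y * b := by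
  simp [pt, PiLp.inner_apply, Fin.sum_univ_two, mul_comm]

lemma perp_pt (a b : ℝ) : perp (pt a b) = pt (-b) a := rfl

lemma perp_perp (u : EuclideanSpace ℝ (Fin 2)) : perp (perp u) = -u := by
  rw [← pt_eta u, perp_pt, perp_pt, neg_pt]

lemma perp_neg (u : EuclideanSpace ℝ (Fin 2)) : perp (-u) = -perp u := by
  rw [← pt_eta u, neg_pt, perp_pt, perp_pt, neg_pt, neg_neg]

lemma wext_eq_sub {v : EuclideanSpace ℝ (Fin 2)} {P : Set (EuclideanSpace ℝ (Fin 2))} {M m : ℝ}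
    (hM : IsGreatest ((⟪·, v⟫) '' P) M) (hm : IsLeast ((⟪·, v⟫) '' P) m) :
    wext v P = M - m := by
  obtain ⟨⟨p, hp, rfl⟩, hM⟩ := hM
  obtain ⟨⟨q, hq, rfl⟩, hm⟩ := hm
  refine IsGreatest.csSup_eq ⟨⟨p, hp, q, hq, (inner_sub_left p q v).symm⟩, ?_⟩
  rintro x ⟨p', hp', q', hq', rfl⟩
  rw [inner_sub_left]
  exact sub_le_sub (hM ⟨p', hp', rfl⟩) (hm ⟨q', hq', rfl⟩)

lemma wext_neg (u : EuclideanSpace ℝ (Fin 2)) (P : Set (EuclideanSpace ℝ (Fin 2))) :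
    wext (-u) P = wext u P := by
  have swap : ∀ v : EuclideanSpace ℝ (Fin 2), ∀ p q, ⟪p - q, -v⟫ = ⟪q - p, v⟫ := by
    intro v p q
    rw [inner_neg_right, ← inner_neg_left, neg_sub]
  unfold wext
  congr 1
  ext x
  constructor <;> rintro ⟨p, hp, q, hq, rfl⟩
  · exact ⟨q, hq, p, hp, swap u p q⟩
  · exact ⟨q, hq, p, hp, (swap u q p).symm⟩

lemma fOBB_perp (u : EuclideanSpace ℝ (Fin 2)) (P : Set (EuclideanSpace ℝ (Fin 2))) :
    fOBB (perp u) P = fOBB u P := by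
  rw [fOBB, fOBB, perp_perp, wext_neg, mul_comm]

lemma fOBB_neg (u : EuclideanSpace ℝ (Fin 2)) (P : Set (EuclideanSpace ℝ (Fin 2))) :
    fOBB (-u) P = fOBB u P := by
  rw [fOBB, fOBB, perp_neg, wext_neg, wext_neg]

lemma image_inner_Q (a b : ℝ) :
    (⟪·, pt a b⟫) '' 𝒬 = {0, 2 * a + b, 3/4 * a + b, 5/4 * a} := by
  simp only [Set.image_insert_eq, Set.image_singleton, inner_pt]
  ring_nf

lemma wext_Q {a b M m : ℝ} (hM : IsGreatest {0, 2 * a + b, 3/4 * a + b, 5/4 * a} M)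
    (hm : IsLeast {0, 2 * a + b, 3/4 * a + b, 5/4 * a} m) : wext (pt a b) 𝒬 = M - m := by
  rw [← image_inner_Q] at hM hm
  exact wext_eq_sub hM hm

lemma wext_Q_of_nonneg {a b : ℝ} (ha : 0 ≤ a) (hb : 0 ≤ b) : wext (pt a b) 𝒬 = 2 * a + b := by
  rw [wext_Q (M := 2 * a + b) (m := 0)]
  · ring
  all_goals exact ⟨by simp, by rintro x (rfl | rfl | rfl | rfl) <;> linarith⟩

lemma wext_perp_Q_of_le {a b : ℝ} (hb : 0 ≤ b) (hab : 3 * b ≤ 4 * a) :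
    wext (perp (pt a b)) 𝒬 = a + b / 2 := by
  rw [perp_pt, wext_Q (M := 3/4 * -b + a) (m := 5/4 * -b)]
  · ring
  all_goals exact ⟨by simp, by rintro x (rfl | rfl | rfl | rfl) <;> linarith⟩

lemma wext_perp_Q_of_ge {a b : ℝ} (ha : 0 ≤ a) (hab : 4 * a ≤ 3 * b) :
    wext (perp (pt a b)) 𝒬 = 2 * b - a := by
  rw [perp_pt, wext_Q (M := 0) (m := 2 * -b + a)]
  · ring
  all_goals exact ⟨by simp, by rintro x (rfl | rfl | rfl | rfl) <;> linarith⟩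

lemma fOBB_Q_of_le {a b : ℝ} (ha : 0 ≤ a) (hb : 0 ≤ b) (hab : 3 * b ≤ 4 * a) :
    fOBB (pt a b) 𝒬 = (2 * a + b) * (a + b / 2) := by
  rw [fOBB, wext_Q_of_nonneg ha hb, wext_perp_Q_of_le hb hab]

lemma fOBB_Q_of_ge {a b : ℝ} (ha : 0 ≤ a) (hb : 0 ≤ b) (hab : 4 * a ≤ 3 * b) :
    fOBB (pt a b) 𝒬 = (2 * a + b) * (2 * b - a) := by
  rw [fOBB, wext_Q_of_nonneg ha hb, wext_perp_Q_of_ge ha hab]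

lemma two_le_fOBB_Q_of_nonneg {a b : ℝ} (ha : 0 ≤ a) (hb : 0 ≤ b) (hunit : a ^ 2 + b ^ 2 = 1) :
    2 ≤ fOBB (pt a b) 𝒬 := by
  rcases le_total (3 * b) (4 * a) with hab | hab
  · rw [fOBB_Q_of_le ha hb hab]
    nlinarith [mul_nonneg hb (sub_nonneg.2 hab)]
  · rw [fOBB_Q_of_ge ha hb hab]
    nlinarith [mul_nonneg ha (sub_nonneg.2 hab)]

lemma two_le_fOBB_Q {u : EuclideanSpace ℝ (Fin 2)} (hu : ‖u‖ = 1) : 2 ≤ fOBB u 𝒬 := by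
  have hunit : u 0 ^ 2 + u 1 ^ 2 = 1 := by
    simpa [hu, Fin.sum_univ_two] using (EuclideanSpace.real_norm_sq_eq u).symm
  rw [← pt_eta u]
  rcases le_total 0 (u 0) with h0 | h0 <;> rcases le_total 0 (u 1) with h1 | h1
  · exact two_le_fOBB_Q_of_nonneg h0 h1 hunit
  · rw [← fOBB_perp, perp_pt]
    exact two_le_fOBB_Q_of_nonneg (neg_nonneg.2 h1) h0 (by linear_combination hunit)
  · rw [← neg_neg (u 0), ← perp_pt, fOBB_perp]
    exact two_le_fOBB_Q_of_nonneg h1 (neg_nonneg.2 h0) (by linear_combination hunit)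
  · rw [← fOBB_neg, neg_pt]
    exact two_le_fOBB_Q_of_nonneg (neg_nonneg.2 h0) (neg_nonneg.2 h1) (by linear_combination hunit)

lemma sin_arctan_eq_mul_cos (x : ℝ) : sin (arctan x) = x * cos (arctan x) := by
  rw [sin_arctan, cos_arctan, mul_one_div]

/-- For the static point set `Q = {(0,0), (2,1), (3/4,1), (5/4,0)}`, the minimum
oriented-bounding-box area over all unit orientations is `2`, attained at
orientation `(1,0)` and at orientation `2·arctan(1/2)`, while the intermediate
orientation `arctan(1/2)` has cost `5/2`. -/
theorem stmt_6 :
    (∀ u : EuclideanSpace ℝ (Fin 2), ‖u‖ = 1 →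
        2 ≤ fOBB u {pt 0 0, pt 2 1, pt (3/4) 1, pt (5/4) 0}) ∧
    fOBB (pt 1 0) {pt 0 0, pt 2 1, pt (3/4) 1, pt (5/4) 0} = 2 ∧
    fOBB (pt (Real.cos (2 * Real.arctan (1/2))) (Real.sin (2 * Real.arctan (1/2))))
        {pt 0 0, pt 2 1, pt (3/4) 1, pt (5/4) 0} = 2 ∧
    fOBB (pt (Real.cos (Real.arctan (1/2))) (Real.sin (Real.arctan (1/2))))
        {pt 0 0, pt 2 1, pt (3/4) 1, pt (5/4) 0} = 5/2 := by
  set c := cos (arctan (1/2))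
  have hc : 0 < c := cos_arctan_pos _
  have hc2 : c ^ 2 = 4/5 := by rw [cos_sq_arctan]; norm_num
  have hs : sin (arctan (1/2)) = c / 2 := by rw [sin_arctan_eq_mul_cos]; ring
  have hcos2 : cos (2 * arctan (1/2)) = 3/5 := by rw [cos_two_mul, hc2]; norm_num
  have hsin2 : sin (2 * arctan (1/2)) = 4/5 := by rw [sin_two_mul, hs]; linear_combination hc2
  refine ⟨fun u hu ↦ two_le_fOBB_Q hu, ?_, ?_, ?_⟩
  · rw [fOBB_Q_of_le] <;> norm_num
  · rw [hcos2, hsin2, fOBB_Q_of_le] <;> norm_num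
  · rw [hs, fOBB_Q_of_le hc.le (by positivity) (by linarith)]
    linear_combination (25/8) * hc2

end
end

section
/- Let u, v ∈ ℝ² satisfy ‖u‖ = ‖v‖ = |u₁·v₂ − u₂·v₁| > 0. Then min(‖u+v‖, ‖u−v‖) ≤ √2. -/
lemma nsq_aux (w : EuclideanSpace ℝ (Fin 2)) : ‖w‖ ^ 2 = w 0 ^ 2 + w 1 ^ 2 := by
  rw [EuclideanSpace.norm_eq, Real.sq_sqrt (by positivity)]
  simp [Fin.sum_univ_two, Real.norm_eq_abs, sq_abs]

/-- If `u` and `v` span a parallelogram whose area `|u₁v₂ − u₂v₁|` equals both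
`‖u‖` and `‖v‖` (i.e. both strip widths are `1`) and is positive, then the shorter
diagonal has length at most `√2`. -/
theorem stmt_7 (u v : EuclideanSpace ℝ (Fin 2))
    (hu : ‖u‖ = |u 0 * v 1 - u 1 * v 0|)
    (hv : ‖v‖ = |u 0 * v 1 - u 1 * v 0|)
    (hpos : 0 < |u 0 * v 1 - u 1 * v 0|) :
    min ‖u + v‖ ‖u - v‖ ≤ Real.sqrt 2 := by
  set A := u 0; set B := u 1; set C := v 0; set D := v 1
  set d := A * D - B * C with hd
  set s := A * C + B * D with hs
  have hu2 : A ^ 2 + B ^ 2 = d ^ 2 := by rw [← nsq_aux u, hu, sq_abs]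
  have hv2 : C ^ 2 + D ^ 2 = d ^ 2 := by rw [← nsq_aux v, hv, sq_abs]
  have key : s ^ 2 + d ^ 2 = (A ^ 2 + B ^ 2) * (C ^ 2 + D ^ 2) := by ring
  rw [hu2, hv2] at key
  have hdpos : 0 < d ^ 2 := by
    have : d ≠ 0 := by
      intro h; rw [h] at hpos; simp at hpos
    positivity
  have hd2 : 1 ≤ d ^ 2 := by nlinarith [sq_nonneg s]
  have hadd : ((u + v) : EuclideanSpace ℝ (Fin 2)) 0 = A + C := rfl
  have hadd1 : ((u + v) : EuclideanSpace ℝ (Fin 2)) 1 = B + D := rfl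
  have hsub : ((u - v) : EuclideanSpace ℝ (Fin 2)) 0 = A - C := rfl
  have hsub1 : ((u - v) : EuclideanSpace ℝ (Fin 2)) 1 = B - D := rfl
  have bound : ∀ w : EuclideanSpace ℝ (Fin 2), ‖w‖ ^ 2 ≤ 2 → ‖w‖ ≤ Real.sqrt 2 := by
    intro w h
    calc ‖w‖ = Real.sqrt (‖w‖ ^ 2) := (Real.sqrt_sq (norm_nonneg _)).symm
    _ ≤ Real.sqrt 2 := Real.sqrt_le_sqrt h
  rcases le_total s 0 with h | h
  · apply le_trans (min_le_left _ _)
    apply bound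
    rw [nsq_aux, hadd, hadd1]
    have habs : d ^ 2 - 1 ≤ -s := by
      nlinarith [sq_nonneg (s + d ^ 2 - 1)]
    nlinarith
  · apply le_trans (min_le_right _ _)
    apply bound
    rw [nsq_aux, hsub, hsub1]
    have habs : d ^ 2 - 1 ≤ s := by
      nlinarith [sq_nonneg (s - d ^ 2 + 1)]
    nlinarith
end

section
/- For every real x > 0, let P = {(0,0), (1,0), (0,x), (1,x)} ⊂ ℝ² and let d = (√2/2, √2/2). Then w_{d⊥}(P) = (1+x)·√2/2, inf over all unit vectors u of w_{u⊥}(P) equals min(x, 1), and consequently w_{d⊥}(P) ≥ √2 · inf_{u} w_{u⊥}(P). -/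
/-!
The extent of the corner set of an `a × b` rectangle along `v` is `a |v₀| + b |v₁|`: the bound
holds for any two points of the rectangle, and it is attained by a pair of opposite corners.
For a unit vector `u` this gives width `a |u₁| + b |u₀| ≥ min b a · (|u₀| + |u₁|) ≥ min b a`,
with equality at the coordinate directions, while the diagonal direction gives `(a + b) √2 / 2`.
-/

open Real
open scoped RealInnerProductSpace

noncomputable section

@[simp] lemma pt_apply_zero (a b : ℝ) : pt a b 0 = a := rfl

@[simp] lemma pt_apply_one (a b : ℝ) : pt a b 1 = b := rfl

@[simp] lemma perp_apply_zero (v : EuclideanSpace ℝ (Fin 2)) : perp v 0 = -v 1 := rfl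

@[simp] lemma perp_apply_one (v : EuclideanSpace ℝ (Fin 2)) : perp v 1 = v 0 := rfl

lemma inner_eq_fin_two (p v : EuclideanSpace ℝ (Fin 2)) : ⟪p, v⟫ = p 0 * v 0 + p 1 * v 1 := by
  simp [PiLp.inner_apply, Fin.sum_univ_two]; ring

lemma sq_add_sq_of_norm_eq_one {u : EuclideanSpace ℝ (Fin 2)} (hu : ‖u‖ = 1) :
    u 0 ^ 2 + u 1 ^ 2 = 1 := by
  simpa [EuclideanSpace.norm_eq, Fin.sum_univ_two] using hu

lemma one_le_abs_add_abs_of_sq_add_sq_eq_one {s t : ℝ} (h : s ^ 2 + t ^ 2 = 1) :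
    1 ≤ |s| + |t| := by
  have hsq : (|s| + |t|) ^ 2 = 1 + 2 * (|s| * |t|) := by
    rw [add_sq, sq_abs, sq_abs, ← h]; ring
  nlinarith [abs_nonneg s, abs_nonneg t, mul_nonneg (abs_nonneg s) (abs_nonneg t)]

lemma sub_mul_le_mul_abs {s t a c : ℝ} (hs : s ∈ Set.Icc 0 a) (ht : t ∈ Set.Icc 0 a) :
    (s - t) * c ≤ a * |c| :=
  calc (s - t) * c ≤ |s - t| * |c| := by rw [← abs_mul]; exact le_abs_self _
    _ ≤ a * |c| := by
      gcongr
      exact abs_sub_le_of_nonneg_of_le hs.1 hs.2 ht.1 ht.2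

lemma inner_sub_le_of_mem_rectangle {a b : ℝ} {p q : EuclideanSpace ℝ (Fin 2)}
    (hp : p 0 ∈ Set.Icc 0 a ∧ p 1 ∈ Set.Icc 0 b) (hq : q 0 ∈ Set.Icc 0 a ∧ q 1 ∈ Set.Icc 0 b)
    (v : EuclideanSpace ℝ (Fin 2)) : ⟪p - q, v⟫ ≤ a * |v 0| + b * |v 1| := by
  rw [inner_eq_fin_two]
  simp only [PiLp.sub_apply]
  exact add_le_add (sub_mul_le_mul_abs hp.1 hq.1) (sub_mul_le_mul_abs hp.2 hq.2)

lemma inner_pt_sub_pt (s t s' t' : ℝ) (v : EuclideanSpace ℝ (Fin 2)) :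
    ⟪pt s t - pt s' t', v⟫ = (s - s') * v 0 + (t - t') * v 1 := by
  rw [inner_sub_left, inner_eq_fin_two, inner_eq_fin_two]
  simp only [pt_apply_zero, pt_apply_one]
  ring

lemma wext_rectangle {a b : ℝ} (ha : 0 ≤ a) (hb : 0 ≤ b) (v : EuclideanSpace ℝ (Fin 2)) :
    wext v {pt 0 0, pt a 0, pt 0 b, pt a b} = a * |v 0| + b * |v 1| := by
  set P : Set (EuclideanSpace ℝ (Fin 2)) := {pt 0 0, pt a 0, pt 0 b, pt a b}
  set S : Set ℝ := {y : ℝ | ∃ p ∈ P, ∃ q ∈ P, y = ⟪p - q, v⟫}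
  have hbox : ∀ p ∈ P, p 0 ∈ Set.Icc 0 a ∧ p 1 ∈ Set.Icc 0 b := by
    intro p hp
    rcases hp with rfl | rfl | rfl | rfl <;> simp [ha, hb]
  have hub : ∀ y ∈ S, y ≤ a * |v 0| + b * |v 1| := by
    rintro y ⟨p, hp, q, hq, rfl⟩
    exact inner_sub_le_of_mem_rectangle (hbox p hp) (hbox q hq) v
  have hattained : a * |v 0| + b * |v 1| ∈ S := by
    rcases le_or_gt 0 (v 0) with h0 | h0 <;> rcases le_or_gt 0 (v 1) with h1 | h1
    · exact ⟨pt a b, by simp [P], pt 0 0, by simp [P], by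
        rw [inner_pt_sub_pt, abs_of_nonneg h0, abs_of_nonneg h1]; ring⟩
    · exact ⟨pt a 0, by simp [P], pt 0 b, by simp [P], by
        rw [inner_pt_sub_pt, abs_of_nonneg h0, abs_of_neg h1]; ring⟩
    · exact ⟨pt 0 b, by simp [P], pt a 0, by simp [P], by
        rw [inner_pt_sub_pt, abs_of_neg h0, abs_of_nonneg h1]; ring⟩
    · exact ⟨pt 0 0, by simp [P], pt a b, by simp [P], by
        rw [inner_pt_sub_pt, abs_of_neg h0, abs_of_neg h1]; ring⟩
  exact le_antisymm (csSup_le ⟨_, hattained⟩ hub) (le_csSup ⟨_, hub⟩ hattained)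

lemma wext_perp_rectangle {a b : ℝ} (ha : 0 ≤ a) (hb : 0 ≤ b) (u : EuclideanSpace ℝ (Fin 2)) :
    wext (perp u) {pt 0 0, pt a 0, pt 0 b, pt a b} = a * |u 1| + b * |u 0| := by
  rw [wext_rectangle ha hb, perp_apply_zero, perp_apply_one, abs_neg]

lemma min_le_wext_perp_rectangle {a b : ℝ} (ha : 0 ≤ a) (hb : 0 ≤ b)
    {u : EuclideanSpace ℝ (Fin 2)} (hu : ‖u‖ = 1) :
    min b a ≤ wext (perp u) {pt 0 0, pt a 0, pt 0 b, pt a b} := by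
  have hsum := one_le_abs_add_abs_of_sq_add_sq_eq_one (sq_add_sq_of_norm_eq_one hu)
  rw [wext_perp_rectangle ha hb]
  calc min b a ≤ min b a * (|u 0| + |u 1|) := le_mul_of_one_le_right (le_min hb ha) hsum
    _ = min b a * |u 0| + min b a * |u 1| := mul_add _ _ _
    _ ≤ a * |u 1| + b * |u 0| := by
      rw [add_comm]
      gcongr
      exacts [min_le_right b a, min_le_left b a]

lemma sInf_wext_perp_rectangle {a b : ℝ} (ha : 0 ≤ a) (hb : 0 ≤ b) :
    sInf {w : ℝ | ∃ u : EuclideanSpace ℝ (Fin 2), ‖u‖ = 1 ∧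
      w = wext (perp u) {pt 0 0, pt a 0, pt 0 b, pt a b}} = min b a := by
  refine IsLeast.csInf_eq ⟨?_, ?_⟩
  · rcases min_choice b a with hmin | hmin <;> rw [hmin]
    · exact ⟨pt 1 0, by simp [pt, EuclideanSpace.norm_eq],
        by simp [wext_perp_rectangle ha hb]⟩
    · exact ⟨pt 0 1, by simp [pt, EuclideanSpace.norm_eq],
        by simp [wext_perp_rectangle ha hb]⟩
  · rintro w ⟨u, hu, rfl⟩
    exact min_le_wext_perp_rectangle ha hb hu

/-- For `P = {(0,0), (1,0), (0,x), (1,x)}` and diagonal direction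
`d = (√2/2, √2/2)`: the width of `P` in orientation `d` is `(1+x)√2/2`, the
minimum width over all unit orientations is `min x 1`, and hence the width in
orientation `d` is at least `√2` times the minimum width. -/
theorem stmt_8 (x : ℝ) (hx : 0 < x) :
    wext (perp (pt (Real.sqrt 2 / 2) (Real.sqrt 2 / 2)))
        {pt 0 0, pt 1 0, pt 0 x, pt 1 x} = (1 + x) * Real.sqrt 2 / 2 ∧
    sInf {w : ℝ | ∃ u : EuclideanSpace ℝ (Fin 2), ‖u‖ = 1 ∧
        w = wext (perp u) {pt 0 0, pt 1 0, pt 0 x, pt 1 x}} = min x 1 ∧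
    wext (perp (pt (Real.sqrt 2 / 2) (Real.sqrt 2 / 2)))
        {pt 0 0, pt 1 0, pt 0 x, pt 1 x}
      ≥ Real.sqrt 2 * sInf {w : ℝ | ∃ u : EuclideanSpace ℝ (Fin 2), ‖u‖ = 1 ∧
          w = wext (perp u) {pt 0 0, pt 1 0, pt 0 x, pt 1 x}} := by
  have hdiag : wext (perp (pt (Real.sqrt 2 / 2) (Real.sqrt 2 / 2)))
      {pt 0 0, pt 1 0, pt 0 x, pt 1 x} = (1 + x) * Real.sqrt 2 / 2 := by
    rw [wext_perp_rectangle zero_le_one hx.le, pt_apply_zero, pt_apply_one,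
      abs_of_nonneg (by positivity)]
    ring
  have hmin := sInf_wext_perp_rectangle zero_le_one hx.le
  refine ⟨hdiag, hmin, ?_⟩
  rw [hdiag, hmin, ge_iff_le]
  have h2min : 2 * min x 1 ≤ 1 + x := by linarith [min_le_left x 1, min_le_right x 1]
  calc Real.sqrt 2 * min x 1 = 2 * min x 1 * Real.sqrt 2 / 2 := by ring
    _ ≤ (1 + x) * Real.sqrt 2 / 2 := by gcongr

end
end

section
/- Let ι be a finite nonempty index set, D > 0, 0 ≤ z ≤ 1 and Δt ≥ 0. Let p : ι → ℝ² with p(i) ∈ [0, D] × [0, z·D] for all i and with diam(p(ι)) = D. Let q : ι → ℝ² satisfy ‖q(i) − p(i)‖ ≤ Δt for all i, and suppose there are indices a, b with ‖q(a) − q(b)‖ = diam(q(ι)) and ‖q(a) − q(b)‖ ≥ 1. Then the angle γ ∈ [0, π/2] between the line through q(a) and q(b) and the x-axis satisfies sin γ ≤ z + Δt·(2 + 2z); equivalently, |⟨q(a) − q(b), (0,1)⟩| ≤ (z + Δt(2+2z))·‖q(a) − q(b)‖. -/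
open Real

lemma coord_le_norm (x : EuclideanSpace ℝ (Fin 2)) (j : Fin 2) : |x j| ≤ ‖x‖ := by
  rw [EuclideanSpace.norm_eq]
  have h : |x j| = Real.sqrt (|x j| ^ 2) := (Real.sqrt_sq (abs_nonneg _)).symm
  rw [h]
  apply Real.sqrt_le_sqrt
  rw [sq_abs]
  have := Finset.single_le_sum (f := fun i => ‖x i‖ ^ 2)
    (fun i _ => by positivity) (Finset.mem_univ j)
  simpa [Real.norm_eq_abs, sq_abs] using this

/-- Lemma 8 of the paper: if all points initially lie in a diametric box
`[0, D] × [0, zD]` with diameter `D`, and each point moves by at most `Δt`, then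
the orientation of the new diametrical pair (assuming new diameter at least `1`)
makes an angle `γ` with the x-axis satisfying `sin γ ≤ z + Δt(2 + 2z)`, i.e.
`|⟨q a − q b, (0,1)⟩| ≤ (z + Δt(2+2z))·‖q a − q b‖`. -/
theorem stmt_9 (ι : Type*) [Fintype ι] [Nonempty ι]
    (D z Δt : ℝ) (hD : 0 < D) (hz₀ : 0 ≤ z) (hz₁ : z ≤ 1) (hΔt : 0 ≤ Δt)
    (p : ι → EuclideanSpace ℝ (Fin 2))
    (hbox : ∀ i, p i 0 ∈ Set.Icc 0 D ∧ p i 1 ∈ Set.Icc 0 (z * D))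
    (hdiam : Metric.diam (Set.range p) = D)
    (q : ι → EuclideanSpace ℝ (Fin 2))
    (hq : ∀ i, ‖q i - p i‖ ≤ Δt)
    (a b : ι)
    (hab : ‖q a - q b‖ = Metric.diam (Set.range q))
    (hab1 : 1 ≤ ‖q a - q b‖) :
    |q a 1 - q b 1| ≤ (z + Δt * (2 + 2 * z)) * ‖q a - q b‖ := by
  set L := ‖q a - q b‖ with hL
  -- y-coordinate displacement bounds
  have hy : ∀ i, |q i 1 - p i 1| ≤ Δt := fun i =>
    le_trans (coord_le_norm (q i - p i) 1) (hq i)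
  -- y-coordinate difference bound
  have hya := hy a
  have hyb := hy b
  have hpa := (hbox a).2
  have hpb := (hbox b).2
  have habs : |q a 1 - q b 1| ≤ z * D + 2 * Δt := by
    have h1 : q a 1 - q b 1 = (q a 1 - p a 1) + (p a 1 - p b 1) + (p b 1 - q b 1) := by ring
    have h2 : |p a 1 - p b 1| ≤ z * D := by
      rw [abs_le]
      constructor <;> [nlinarith [hpa.1, hpb.2]; nlinarith [hpa.2, hpb.1]]
    calc |q a 1 - q b 1| ≤ |q a 1 - p a 1| + |p a 1 - p b 1| + |p b 1 - q b 1| := by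
          rw [h1]; exact (abs_add_le _ _).trans (by gcongr; exact abs_add_le _ _)
      _ ≤ Δt + z * D + Δt := by
          have : |p b 1 - q b 1| = |q b 1 - p b 1| := abs_sub_comm _ _
          rw [this]; gcongr
      _ = z * D + 2 * Δt := by ring
  -- diameter lower bound: L ≥ D - 2Δt
  have hLD : D - 2 * Δt ≤ L := by
    have hbdd : Bornology.IsBounded (Set.range q) := (Set.finite_range q).isBounded
    have hdq : ∀ i j : ι, dist (p i) (p j) ≤ L + 2 * Δt := by
      intro i j
      have h1 : dist (q i) (q j) ≤ Metric.diam (Set.range q) :=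
        Metric.dist_le_diam_of_mem hbdd (Set.mem_range_self i) (Set.mem_range_self j)
      have h2 : dist (p i) (p j) ≤ dist (p i) (q i) + dist (q i) (q j) + dist (q j) (p j) :=
        dist_triangle4 _ _ _ _
      have h3 : dist (p i) (q i) ≤ Δt := by
        rw [dist_comm, dist_eq_norm]; exact hq i
      have h4 : dist (q j) (p j) ≤ Δt := by
        rw [dist_eq_norm]; exact hq j
      rw [hab] at hL
      linarith
    have : Metric.diam (Set.range p) ≤ L + 2 * Δt := by
      apply Metric.diam_le_of_forall_dist_le (by linarith)
      rintro x ⟨i, rfl⟩ y ⟨j, rfl⟩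
      exact hdq i j
    linarith [hdiam ▸ this]
  -- final arithmetic
  have key : z * D + 2 * Δt ≤ (z + Δt * (2 + 2 * z)) * L := by
    nlinarith [mul_nonneg hz₀ (sub_nonneg.mpr hLD), mul_nonneg hΔt (sub_nonneg.mpr hab1),
      mul_nonneg (mul_nonneg hΔt hz₀) (sub_nonneg.mpr hab1)]
  linarith
end

section
/- For all real x with 0 ≤ x ≤ 1: (1) if λ ≥ 1 then sin(λ·arcsin x) ≤ λ·x; (2) if 0 < λ ≤ 1 then sin(λ·arcsin x) ≥ λ·x. -/
open Real

lemma sin_smul_ge (θ : ℝ) (h0 : 0 ≤ θ) (h1 : θ ≤ π) (l : ℝ) (hl0 : 0 ≤ l)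
    (hl1 : l ≤ 1) : l * Real.sin θ ≤ Real.sin (l * θ) := by
  have := strictConcaveOn_sin_Icc.concaveOn.2
    (show (0:ℝ) ∈ Set.Icc 0 π from ⟨le_rfl, Real.pi_pos.le⟩) ⟨h0, h1⟩
    (show (0:ℝ) ≤ 1 - l by linarith) hl0 (by ring)
  simpa using this

/-- Lemma 11 of the paper: for `0 ≤ x ≤ 1`, `sin(λ·arcsin x) ≤ λ·x` when `λ ≥ 1`,
and `sin(λ·arcsin x) ≥ λ·x` when `0 < λ ≤ 1`. -/
theorem stmt_12 (x : ℝ) (hx₀ : 0 ≤ x) (hx₁ : x ≤ 1) :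
    (∀ l : ℝ, 1 ≤ l → Real.sin (l * Real.arcsin x) ≤ l * x) ∧
    (∀ l : ℝ, 0 < l → l ≤ 1 → Real.sin (l * Real.arcsin x) ≥ l * x) := by
  set θ := Real.arcsin x with hθ
  have hθ0 : 0 ≤ θ := Real.arcsin_nonneg.2 hx₀
  have hθπ : θ ≤ π / 2 := Real.arcsin_le_pi_div_two x
  have hsθ : Real.sin θ = x := Real.sin_arcsin (by linarith) hx₁
  constructor
  · intro l hl
    have hl0 : 0 < l := lt_of_lt_of_le one_pos hl
    by_cases hcase : l * θ ≤ π
    · have := sin_smul_ge (l * θ) (by positivity) hcase (1 / l)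
        (by positivity) (by rw [div_le_one hl0]; linarith)
      have h2 : (1 / l) * (l * θ) = θ := by field_simp
      rw [h2] at this
      rw [← hsθ]
      calc Real.sin (l * θ) = l * ((1/l) * Real.sin (l * θ)) := by field_simp
        _ ≤ l * Real.sin θ := by
            exact mul_le_mul_of_nonneg_left this hl0.le
    · push_neg at hcase
      have hθpos : 0 < θ := by
        by_contra h
        push_neg at h
        have : θ = 0 := le_antisymm h hθ0
        rw [this] at hcase; simp at hcase
        linarith [Real.pi_pos]
      have hjordan : 2 / π * θ ≤ Real.sin θ := Real.mul_le_sin hθ0 hθπ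
      have hπ : 0 < π := Real.pi_pos
      have : 2 < l * x := by
        rw [← hsθ]
        calc (2:ℝ) = (π / θ) * (2 / π * θ) := by field_simp
          _ < l * (2 / π * θ) := by
              apply mul_lt_mul_of_pos_right _ (by positivity)
              rw [div_lt_iff₀ hθpos]; linarith
          _ ≤ l * Real.sin θ := mul_le_mul_of_nonneg_left hjordan hl0.le
      linarith [Real.sin_le_one (l * θ)]
  · intro l hl0 hl1
    rw [ge_iff_le, ← hsθ]
    exact sin_smul_ge θ hθ0 (by linarith [Real.pi_pos]) l hl0.le hl1
end

section
/- For all real z and Δt with 0 ≤ z ≤ 1/2 and 0 ≤ Δt ≤ z/4: arcsin(z + Δt·(2 + 2z)) + 8·arcsin(z) − 8·arcsin( (sin(½·arcsin z) − 2Δt)/(1 + 2Δt) ) ≤ 9.62·z + 1.22·Δt·(2 + 2z) ≤ 10.6·z. -/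
/-!
`arcsin` is convex on `[0, 1]` and vanishes at `0`, so `arcsin y / y` increases there: hence
`arcsin y ≤ 1.22 y` for `y ≤ 7/8` and `arcsin z ≤ 1.05 z` for `z ≤ 1/2`, by evaluating at the
right endpoints (`arcsin (1/2) = π/6`). The argument of the last `arcsin` is nonnegative, since
`2 sin (θ/2) ≥ sin θ = z ≥ 4 Δt` for `θ = arcsin z`, so that term may be dropped, and
`1.22 (z + Δt (2 + 2z)) + 8 · 1.05 z` is the middle expression.
-/

open Real

lemma sin_le_two_mul_sin_half {θ : ℝ} (h₀ : 0 ≤ θ) (h₁ : θ ≤ 2 * π) :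
    sin θ ≤ 2 * sin (θ / 2) := by
  have hs : 0 ≤ sin (θ / 2) := sin_nonneg_of_nonneg_of_le_pi (by linarith) (by linarith)
  calc sin θ = 2 * sin (θ / 2) * cos (θ / 2) := by rw [← sin_two_mul]; ring_nf
    _ ≤ 2 * sin (θ / 2) * 1 := mul_le_mul_of_nonneg_left (cos_le_one _) (by positivity)
    _ = 2 * sin (θ / 2) := mul_one _

lemma arcsin_mul_le_mul_arcsin {y b : ℝ} (hy : 0 ≤ y) (hyb : y ≤ b) (hb : b ≤ 1) :
    arcsin y * b ≤ y * arcsin b := by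
  obtain rfl | hb₀ := (hy.trans hyb).eq_or_lt
  · simp
  set t := y / b
  have ht₀ : 0 ≤ t := div_nonneg hy hb₀.le
  have ht₁ : t ≤ 1 := div_le_one_of_le₀ hyb hb₀.le
  have ha₀ : 0 ≤ arcsin b := arcsin_nonneg.2 hb₀.le
  have ha₁ : arcsin b ≤ π / 2 := arcsin_le_pi_div_two b
  have hsin : t * b ≤ sin (t * arcsin b) := by
    have := strictConcaveOn_sin_Icc.concaveOn.2 (x := arcsin b) (y := 0)
      ⟨ha₀, by linarith [pi_pos]⟩ ⟨le_rfl, pi_pos.le⟩ ht₀ (sub_nonneg.2 ht₁) (by ring)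
    simpa [sin_arcsin (by linarith) hb] using this
  have htb : t * b = y := div_mul_cancel₀ y hb₀.ne'
  have harc : arcsin y ≤ t * arcsin b :=
    (arcsin_le_iff_le_sin ⟨by linarith, by linarith⟩
      ⟨by nlinarith [pi_pos], by nlinarith⟩).2 (htb ▸ hsin)
  calc arcsin y * b ≤ t * arcsin b * b := mul_le_mul_of_nonneg_right harc hb₀.le
    _ = y * arcsin b := by rw [mul_right_comm, htb]

lemma arcsin_le_mul_of_arcsin_le {y b c : ℝ} (hy : 0 ≤ y) (hyb : y ≤ b) (hb : b ≤ 1)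
    (hc : arcsin b ≤ c * b) : arcsin y ≤ c * y := by
  obtain rfl | hb₀ := (hy.trans hyb).eq_or_lt
  · simp [le_antisymm hyb hy]
  refine le_of_mul_le_mul_right ?_ hb₀
  calc arcsin y * b ≤ y * arcsin b := arcsin_mul_le_mul_arcsin hy hyb hb
    _ ≤ y * (c * b) := mul_le_mul_of_nonneg_left hc hy
    _ = c * y * b := by ring

lemma arcsin_one_half_le : arcsin (1 / 2) ≤ 1.05 * (1 / 2) := by
  rw [arcsin_le_iff_le_sin' ⟨by linarith [pi_pos], by linarith [pi_gt_three]⟩]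
  calc 1 / 2 = sin (π / 6) := sin_pi_div_six.symm
    _ ≤ sin (1.05 * (1 / 2)) := sin_le_sin_of_le_of_le_pi_div_two (by linarith [pi_pos])
      (by linarith [pi_gt_three]) (by linarith [pi_lt_d2])

lemma arcsin_seven_eighths_le : arcsin (7 / 8) ≤ 1.22 * (7 / 8) := by
  rw [arcsin_le_iff_le_sin' ⟨by linarith [pi_pos], by linarith [pi_gt_d2]⟩]
  -- `sin 1.0675 = cos (2 v) = 1 - 2 sin² v`; the cubic term of `sin v` is what makes the margin
  set v := (π / 2 - 1.22 * (7 / 8)) / 2 with hv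
  have hv₀ : 0.25 ≤ v := by linarith [pi_gt_d2]
  have hv₁ : v ≤ 0.25165 := by linarith [pi_lt_d4]
  have hsin_v : sin v ≤ v - v ^ 3 / 6 + v ^ 5 / 100 := by
    have := sin_bound (x := v) (by rw [abs_of_nonneg (by linarith)]; linarith)
    rw [abs_of_nonneg (by linarith : 0 ≤ v)] at this
    linarith [le_abs_self (sin v - (v - v ^ 3 / 6))]
  have hsin_v₀ : 0 ≤ sin v :=
    sin_nonneg_of_nonneg_of_le_pi (by linarith) (by linarith [pi_gt_three])
  have hpoly : v - v ^ 3 / 6 + v ^ 5 / 100 ≤ 0.24906 := by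
    nlinarith [pow_le_pow_left₀ (by norm_num) hv₀ 3, pow_le_pow_left₀ (by linarith) hv₁ 5]
  have : sin (1.22 * (7 / 8)) = 1 - 2 * sin v ^ 2 := by
    rw [← cos_two_mul_eq_one_sub, hv, ← cos_pi_div_two_sub]; ring_nf
  rw [this]
  nlinarith

/-- The key estimate inside Lemma 13 of the paper: for `0 ≤ z ≤ 1/2` and
`0 ≤ Δt ≤ z/4`, the endpoint movement bound `ΔE(z, Δt)` satisfies
`ΔE(z, Δt) ≤ 9.62·z + 1.22·Δt·(2+2z) ≤ 10.6·z`. -/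
theorem stmt_14 (z Δt : ℝ) (hz₀ : 0 ≤ z) (hz₁ : z ≤ 1/2)
    (hΔt₀ : 0 ≤ Δt) (hΔt₁ : Δt ≤ z / 4) :
    Real.arcsin (z + Δt * (2 + 2 * z)) + 8 * Real.arcsin z -
        8 * Real.arcsin ((Real.sin (1/2 * Real.arcsin z) - 2 * Δt) / (1 + 2 * Δt))
      ≤ 9.62 * z + 1.22 * Δt * (2 + 2 * z) ∧
    9.62 * z + 1.22 * Δt * (2 + 2 * z) ≤ 10.6 * z := by
  have hy : arcsin (z + Δt * (2 + 2 * z)) ≤ 1.22 * (z + Δt * (2 + 2 * z)) :=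
    arcsin_le_mul_of_arcsin_le (by positivity) (by nlinarith) (by norm_num)
      arcsin_seven_eighths_le
  have hz : arcsin z ≤ 1.05 * z :=
    arcsin_le_mul_of_arcsin_le hz₀ hz₁ (by norm_num) arcsin_one_half_le
  have hhalf : z ≤ 2 * sin (1 / 2 * arcsin z) := by
    have := sin_le_two_mul_sin_half (arcsin_nonneg.2 hz₀)
      (by linarith [arcsin_le_pi_div_two z, pi_pos])
    rwa [sin_arcsin (by linarith) (by linarith), div_eq_inv_mul, ← one_div] at this
  have hw : 0 ≤ arcsin ((sin (1 / 2 * arcsin z) - 2 * Δt) / (1 + 2 * Δt)) :=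
    arcsin_nonneg.2 (div_nonneg (by linarith) (by linarith))
  constructor
  · linarith
  · nlinarith
end

section
/- For every fixed Δt with 0 ≤ Δt ≤ 1/8, the function z ↦ arcsin(z + Δt·(2 + 2z)) + 3·arcsin(z) − 8·arcsin( (sin(½·arcsin z) − 2Δt)/(1 + 2Δt) ) is nondecreasing on the interval 0 ≤ z ≤ 1/2; that is, for 0 ≤ z₁ ≤ z₂ ≤ 1/2 the value at z₁ is at most the value at z₂. -/
/-!
With `c = 1 + 2Δt` and `φ w = arcsin (c (1 + w) - 1) - arcsin w`, the function splits as
`φ z + 8 φ (w z)` where `w z = (sin (½ arcsin z) - 2Δt) / c`: the dilation `v ↦ c (1 + v) - 1`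
sends `w z` back to `sin (½ arcsin z)`, whose `arcsin` is `½ arcsin z`. For `c ≥ 1` the
derivative `c / √(1 - v²) - 1 / √(1 - w²)` of `φ` is nonnegative, and `w` is monotone.
-/

open Real Set

-- `1 - (c (1 + w) - 1)² = c (1 + w) (2 - c (1 + w))`, which falls short of `c² (1 - w²)` by
-- `2 c (c - 1) (1 + w)`.
lemma one_sub_sq_dilate_le {c w : ℝ} (hc : 1 ≤ c) (hw : -1 ≤ w) :
    1 - (c * (1 + w) - 1) ^ 2 ≤ c ^ 2 * (1 - w ^ 2) := by
  nlinarith [mul_nonneg (mul_nonneg (by linarith : (0:ℝ) ≤ c) (by linarith : 0 ≤ 1 + w))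
    (by linarith : 0 ≤ c - 1)]

theorem monotoneOn_arcsin_dilate_sub_arcsin {c : ℝ} (hc : 1 ≤ c) :
    MonotoneOn (fun w ↦ arcsin (c * (1 + w) - 1) - arcsin w) (Icc (-1) (2 / c - 1)) := by
  have hc₀ : 0 < c := by linarith
  refine monotoneOn_of_hasDerivWithinAt_nonneg (convex_Icc _ _)
    (by fun_prop) (f' := fun w ↦ 1 / √(1 - (c * (1 + w) - 1) ^ 2) * c - 1 / √(1 - w ^ 2))
    (fun w hw ↦ ?_) (fun w hw ↦ ?_)
  all_goals
    rw [interior_Icc] at hw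
    obtain ⟨hw₁, hw₂⟩ := hw
    have hv₂ : c * (1 + w) < 2 := by
      rwa [lt_sub_iff_add_lt, lt_div_iff₀ hc₀, add_comm, mul_comm] at hw₂
    have hw₁' : w < 1 := by nlinarith
  · have hinner : HasDerivAt (fun w ↦ c * (1 + w) - 1) c w := by
      simpa using ((hasDerivAt_id w).const_add 1 |>.const_mul c).sub_const 1
    exact (((hasDerivAt_arcsin (by nlinarith) (by linarith)).comp w hinner).sub
      (hasDerivAt_arcsin (by linarith) hw₁'.ne)).hasDerivWithinAt
  · have hw_pos : 0 < 1 - w ^ 2 := by nlinarith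
    have hv_pos : 0 < 1 - (c * (1 + w) - 1) ^ 2 := by
      nlinarith [mul_pos (mul_pos hc₀ (by linarith : 0 < 1 + w))
        (by linarith : 0 < 2 - c * (1 + w))]
    have hsqrt : √(1 - (c * (1 + w) - 1) ^ 2) ≤ c * √(1 - w ^ 2) := by
      rw [sqrt_le_left (by positivity), mul_pow, sq_sqrt hw_pos.le]
      exact one_sub_sq_dilate_le hc hw₁.le
    rw [sub_nonneg, div_mul_eq_mul_div, one_mul, div_le_div_iff₀ (by positivity) (by positivity)]
    linarith

lemma half_arcsin_mem_Icc (z : ℝ) : 1 / 2 * arcsin z ∈ Icc (-(π / 2)) (π / 2) := by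
  constructor <;> linarith [neg_pi_div_two_le_arcsin z, arcsin_le_pi_div_two z, pi_pos]

lemma arcsin_sin_half_arcsin (z : ℝ) : arcsin (sin (1 / 2 * arcsin z)) = 1 / 2 * arcsin z :=
  arcsin_sin (half_arcsin_mem_Icc z).1 (half_arcsin_mem_Icc z).2

lemma monotone_sin_half_arcsin : Monotone fun z ↦ sin (1 / 2 * arcsin z) := fun _ _ h ↦
  strictMonoOn_sin.monotoneOn (half_arcsin_mem_Icc _) (half_arcsin_mem_Icc _) (by gcongr)

/-- Monotonicity claim inside Lemma 13 of the paper: for fixed `0 ≤ Δt ≤ 1/8`,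
the function
`z ↦ arcsin(z + Δt(2+2z)) + 3 arcsin z − 8 arcsin((sin(½ arcsin z) − 2Δt)/(1+2Δt))`
is nondecreasing on `[0, 1/2]`. -/
theorem stmt_15 (Δt : ℝ) (hΔt₀ : 0 ≤ Δt) (hΔt₁ : Δt ≤ 1/8)
    (z₁ z₂ : ℝ) (hz₁ : 0 ≤ z₁) (h12 : z₁ ≤ z₂) (hz₂ : z₂ ≤ 1/2) :
    Real.arcsin (z₁ + Δt * (2 + 2 * z₁)) + 3 * Real.arcsin z₁ -
        8 * Real.arcsin ((Real.sin (1/2 * Real.arcsin z₁) - 2 * Δt) / (1 + 2 * Δt))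
      ≤ Real.arcsin (z₂ + Δt * (2 + 2 * z₂)) + 3 * Real.arcsin z₂ -
        8 * Real.arcsin ((Real.sin (1/2 * Real.arcsin z₂) - 2 * Δt) / (1 + 2 * Δt)) := by
  set c := 1 + 2 * Δt
  set φ := fun w ↦ arcsin (c * (1 + w) - 1) - arcsin w
  set w := fun z ↦ (sin (1 / 2 * arcsin z) - 2 * Δt) / c
  have hc₀ : 0 < c := by linarith
  have hφ := monotoneOn_arcsin_dilate_sub_arcsin (c := c) (by linarith)
  have hsplit : ∀ z, arcsin (z + Δt * (2 + 2 * z)) + 3 * arcsin z - 8 * arcsin (w z)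
      = φ z + 8 * φ (w z) := fun z ↦ by
    have hv : c * (1 + w z) - 1 = sin (1 / 2 * arcsin z) := by
      simp only [w]; field_simp; linarith
    have hu : z + Δt * (2 + 2 * z) = c * (1 + z) - 1 := by ring
    simp only [φ, hu, hv, arcsin_sin_half_arcsin]
    ring
  have hz_mem : Icc (0 : ℝ) (1 / 2) ⊆ Icc (-1) (2 / c - 1) :=
    Icc_subset_Icc (by norm_num) (by rw [le_sub_iff_add_le, le_div_iff₀ hc₀]; linarith)
  have hw_mem : ∀ z, w z ∈ Icc (-1) (2 / c - 1) := fun z ↦ by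
    have := neg_one_le_sin (1 / 2 * arcsin z)
    have := sin_le_one (1 / 2 * arcsin z)
    constructor
    · rw [le_div_iff₀ hc₀]; linarith
    · rw [le_sub_iff_add_le, div_add_one hc₀.ne', div_le_div_iff_of_pos_right hc₀]; linarith
  have hw_mono : w z₁ ≤ w z₂ := by
    simp only [w]; gcongr; exact monotone_sin_half_arcsin h12
  have hz₁_mem : z₁ ∈ Icc (0 : ℝ) (1 / 2) := ⟨hz₁, h12.trans hz₂⟩
  have hz₂_mem : z₂ ∈ Icc (0 : ℝ) (1 / 2) := ⟨hz₁.trans h12, hz₂⟩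
  rw [hsplit, hsplit]
  gcongr ?_ + 8 * ?_
  · exact hφ (hz_mem hz₁_mem) (hz_mem hz₂_mem) h12
  · exact hφ (hw_mem _) (hw_mem _) hw_mono
end

section
/- For all real Δt with 0 ≤ Δt ≤ 1/8: π/2 + arcsin(1/2 + 3·Δt) − 8·arcsin( ((√6 − √2)/4 − 2Δt)/(1 + 2Δt) ) ≤ 43·Δt. -/
open Real

/-!
Since `arcsin` is monotone and inverts `sin` on `[-π/2, π/2]`, it suffices to compare the two
arguments with `sin (π/6 + 5Δt)` and `sin (π/12 - 19Δt/4)`, which the Taylor bounds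
`sin u ≥ u - u³/6` and `cos u ≥ 1 - u²/2` do with room to spare. The constant terms cancel,
`π/2 + π/6 - 8 · π/12 = 0`, and the slopes add up to `5 + 8 · 19/4 = 43`.
-/

theorem arcsin_le_of_le_sin {x θ : ℝ} (h₁ : -(π / 2) ≤ θ) (h₂ : θ ≤ π / 2) (h : x ≤ sin θ) :
    arcsin x ≤ θ :=
  (arcsin_le_arcsin h).trans_eq (arcsin_sin h₁ h₂)

theorem le_arcsin_of_sin_le {x θ : ℝ} (h₁ : -(π / 2) ≤ θ) (h₂ : θ ≤ π / 2) (h : sin θ ≤ x) :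
    θ ≤ arcsin x :=
  (arcsin_sin h₁ h₂).symm.trans_le (arcsin_le_arcsin h)

theorem sin_pi_div_twelve : sin (π / 12) = (√6 - √2) / 4 := by
  have h6 : √6 = √3 * √2 := by rw [← sqrt_mul (by norm_num)]; norm_num
  rw [show π / 12 = π / 3 - π / 4 by ring, sin_sub, sin_pi_div_three, cos_pi_div_four,
    cos_pi_div_three, sin_pi_div_four, h6]
  ring

theorem arcsin_one_half_add_le {t : ℝ} (ht₀ : 0 ≤ t) (ht₁ : t ≤ 1 / 8) :
    arcsin (1 / 2 + 3 * t) ≤ π / 6 + 5 * t := by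
  have hπ := pi_gt_three
  refine arcsin_le_of_le_sin (by linarith) (by linarith) ?_
  rw [sin_add, sin_pi_div_six, cos_pi_div_six]
  have hcos := one_sub_sq_div_two_le_cos (x := 5 * t)
  have hsin : 4.65 * t ≤ sin (5 * t) := by
    nlinarith [sin_ge_sub_cube (x := 5 * t) (by positivity), mul_nonneg ht₀ ht₀]
  have hsqrt3 : (1.7 : ℝ) ≤ √3 := by
    rw [le_sqrt (by norm_num) (by norm_num)]; norm_num
  have hsqrt3_sin : 1.7 * (4.65 * t) ≤ √3 * sin (5 * t) :=
    mul_le_mul hsqrt3 hsin (by positivity) (sqrt_nonneg 3)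
  nlinarith

theorem sub_le_arcsin_sin_pi_div_twelve {t : ℝ} (ht₀ : 0 ≤ t) (ht₁ : t ≤ 1 / 8) :
    π / 12 - 19 / 4 * t ≤ arcsin ((sin (π / 12) - 2 * t) / (1 + 2 * t)) := by
  have hπ₃ := pi_gt_three
  have hπ₄ := pi_lt_d2
  refine le_arcsin_of_sin_le (by linarith) (by linarith) ?_
  rw [le_div_iff₀ (by linarith), sin_sub]
  have hs₀ : 0 ≤ sin (π / 12) := sin_nonneg_of_nonneg_of_le_pi (by positivity) (by linarith)
  have hs₁ : sin (π / 12) ≤ π / 12 := sin_le (by positivity)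
  have hc : 0.96 ≤ cos (π / 12) := by nlinarith [one_sub_sq_div_two_le_cos (x := π / 12)]
  have hsin : 4 * t ≤ sin (19 / 4 * t) := by
    nlinarith [sin_ge_sub_cube (x := 19 / 4 * t) (by positivity), mul_nonneg ht₀ ht₀]
  have hcs : 0.96 * (4 * t) ≤ cos (π / 12) * sin (19 / 4 * t) :=
    mul_le_mul hc hsin (by positivity) (by linarith)
  nlinarith [mul_le_mul_of_nonneg_left (cos_le_one (19 / 4 * t)) hs₀]

/-- The final estimate inside Lemma 13 of the paper: for `0 ≤ Δt ≤ 1/8`,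
`π/2 + arcsin(1/2 + 3Δt) − 8·arcsin(((√6 − √2)/4 − 2Δt)/(1 + 2Δt)) ≤ 43·Δt`. -/
theorem stmt_16 (Δt : ℝ) (hΔt₀ : 0 ≤ Δt) (hΔt₁ : Δt ≤ 1/8) :
    π / 2 + Real.arcsin (1/2 + 3 * Δt) -
        8 * Real.arcsin (((Real.sqrt 6 - Real.sqrt 2) / 4 - 2 * Δt) / (1 + 2 * Δt))
      ≤ 43 * Δt := by
  have hA := arcsin_one_half_add_le hΔt₀ hΔt₁
  have hB := sub_le_arcsin_sin_pi_div_twelve hΔt₀ hΔt₁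
  rw [sin_pi_div_twelve] at hB
  linarith
end
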